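/- arXiv:2009.13016 — 6 statements merged into one kernel-verified Lean document; each statement's English description precedes it below -/
import Mathlib

section
/- Let u be a standard Gaussian random vector in R^d (mean 0, identity covariance). Then for every natural number k ≥ 1, E[||u||^k] ≤ (d + k)^{k/2}. -/
open MeasureTheory ProbabilityTheory Real
open scoped BigOperators ENNReal NNReal

/-- Integrability of `exp (t * x^2)` against the standard Gaussian, for `t < 1/2`. -/
lemma aux_integrable_exp_mul_sq_gaussian {t : ℝ} (ht : t < 1/2) :
    Integrable (fun x => rexp (t * x ^ 2)) (gaussianReal 0 1) := by
  rw [gaussianReal_of_var_ne_zero 0 one_ne_zero, gaussianPDF_def]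
  have hmeas : Measurable fun x => (gaussianPDFReal 0 1 x).toNNReal :=
    (measurable_gaussianPDFReal 0 1).real_toNNReal
  have : (fun x => ENNReal.ofReal (gaussianPDFReal 0 1 x))
      = fun x => ((gaussianPDFReal 0 1 x).toNNReal : ℝ≥0∞) := rfl
  rw [this, integrable_withDensity_iff_integrable_smul hmeas]
  have heq : (fun x : ℝ => ((gaussianPDFReal 0 1 x).toNNReal : ℝ≥0) • rexp (t * x ^ 2))
      = fun x : ℝ => (√(2 * π))⁻¹ * rexp (-(1/2 - t) * x ^ 2) := by
    funext x
    rw [NNReal.smul_def, smul_eq_mul,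
      Real.coe_toNNReal _ (gaussianPDFReal_nonneg 0 1 x)]
    simp only [gaussianPDFReal, NNReal.coe_one, mul_one, sub_zero]
    rw [mul_assoc, ← Real.exp_add]
    ring_nf
  rw [heq]
  exact (integrable_exp_neg_mul_sq (by linarith)).const_mul _

/-- Value of `∫ exp (t * x^2)` against the standard Gaussian, for `t < 1/2`. -/
lemma aux_integral_exp_mul_sq_gaussian {t : ℝ} (ht : t < 1/2) :
    ∫ x, rexp (t * x ^ 2) ∂(gaussianReal 0 1) = √(1 - 2*t)⁻¹ := by
  rw [gaussianReal_of_var_ne_zero 0 one_ne_zero, gaussianPDF_def]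
  have hmeas : Measurable fun x => (gaussianPDFReal 0 1 x).toNNReal :=
    (measurable_gaussianPDFReal 0 1).real_toNNReal
  have h0 : (fun x => ENNReal.ofReal (gaussianPDFReal 0 1 x))
      = fun x => ((gaussianPDFReal 0 1 x).toNNReal : ℝ≥0∞) := rfl
  rw [h0, integral_withDensity_eq_integral_smul hmeas]
  have heq : (fun x : ℝ => ((gaussianPDFReal 0 1 x).toNNReal : ℝ≥0) • rexp (t * x ^ 2))
      = fun x : ℝ => (√(2 * π))⁻¹ * rexp (-(1/2 - t) * x ^ 2) := by
    funext x
    rw [NNReal.smul_def, smul_eq_mul,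
      Real.coe_toNNReal _ (gaussianPDFReal_nonneg 0 1 x)]
    simp only [gaussianPDFReal, NNReal.coe_one, mul_one, sub_zero]
    rw [mul_assoc, ← Real.exp_add]
    ring_nf
  rw [heq, integral_const_mul, integral_gaussian]
  rw [← Real.sqrt_inv, ← Real.sqrt_mul (by positivity)]
  congr 1
  have hπ : (0:ℝ) < π := Real.pi_pos
  have hne : (1:ℝ)/2 - t ≠ 0 := by linarith
  have hne2 : π * 2 - π * t * 4 ≠ 0 := by nlinarith
  have hne3 : 1 - t * 2 ≠ 0 := fun h => hne (by linarith)
  have hne4 : 1 - 2 * t ≠ 0 := fun h => hne (by linarith)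
  field_simp [hne, hne4]

/-- The key pointwise bound: `y^a ≤ (a/t)^a * exp (t*y - a)` for `y ≥ 0`, `a, t > 0`. -/
lemma aux_rpow_le_exp {y a t : ℝ} (hy : 0 ≤ y) (ha : 0 < a) (ht : 0 < t) :
    y ^ a ≤ (a / t) ^ a * rexp (t * y - a) := by
  rcases hy.eq_or_lt with h | h
  · rw [← h, Real.zero_rpow ha.ne']
    positivity
  · have hat : 0 < a / t := div_pos ha ht
    rw [← Real.exp_log (Real.rpow_pos_of_pos h a), ← Real.exp_log (Real.rpow_pos_of_pos hat a),
      ← Real.exp_add, Real.exp_le_exp, Real.log_rpow h, Real.log_rpow hat]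
    have hz : 0 < t * y / a := by positivity
    have := Real.log_le_sub_one_of_pos hz
    have hlog : Real.log (t * y / a) = Real.log y - Real.log (a / t) := by
      rw [Real.log_div (by positivity) ha.ne', Real.log_mul ht.ne' h.ne',
        Real.log_div ha.ne' ht.ne']
      ring
    have h7 : a * (t * y / a - 1) = t * y - a := by field_simp
    have h8 := mul_le_mul_of_nonneg_left this ha.le
    rw [h7, hlog] at h8
    linarith

/-- Moment bound for the norm of a standard Gaussian vector in `ℝ^d`:
`E[‖u‖^k] ≤ (d + k)^(k/2)` for all `k ≥ 1`. -/
theorem gaussian_norm_moment_bound {d : ℕ} {Ω : Type*} [MeasurableSpace Ω]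
    (μ : Measure Ω) [IsProbabilityMeasure μ]
    (u : Ω → EuclideanSpace ℝ (Fin d))
    (hmeas : ∀ i, Measurable fun ω => u ω i)
    (hcoord : ∀ i, μ.map (fun ω => u ω i) = gaussianReal 0 1)
    (hindep : iIndepFun (fun i ω => u ω i) μ) :
    ∀ k : ℕ, 1 ≤ k → ∫ ω, ‖u ω‖ ^ k ∂μ ≤ ((d : ℝ) + k) ^ ((k : ℝ) / 2) := by
  intro k hk
  have hk' : (0:ℝ) < k := by exact_mod_cast hk
  -- case d = 0
  rcases Nat.eq_zero_or_pos d with hd0 | hd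
  · subst hd0
    have : ∀ ω, ‖u ω‖ ^ k = 0 := by
      intro ω
      have : u ω = 0 := Subsingleton.elim _ _
      rw [this, norm_zero, zero_pow (by omega)]
    simp only [this, integral_zero]
    positivity
  have hd' : (0:ℝ) < d := by exact_mod_cast hd
  -- setup
  set t : ℝ := k / (2 * (d + k)) with htdef
  have hdk : (0:ℝ) < d + k := by positivity
  have ht0 : 0 < t := by positivity
  have ht2 : t < 1/2 := by
    rw [htdef, div_lt_div_iff₀ (by positivity) two_pos]
    nlinarith
  have h1t : 1 - 2*t = d / (d + k) := by
    rw [htdef]; field_simp; ring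
  -- norm squared as sum of squares
  have hnorm : ∀ ω, ‖u ω‖ ^ 2 = ∑ i, (u ω i) ^ 2 := by
    intro ω
    rw [EuclideanSpace.norm_eq]
    rw [Real.sq_sqrt (by positivity)]
    simp [Real.norm_eq_abs, sq_abs]
  -- the squared coordinates
  set X : Fin d → Ω → ℝ := fun i ω => (u ω i) ^ 2 with hXdef
  have hXindep : iIndepFun X μ :=
    hindep.comp (fun _ x => x ^ 2) (fun _ => measurable_id.pow_const 2)
  have hXmeas : ∀ i, Measurable (X i) := fun i => (hmeas i).pow_const 2
  -- integrability and integral of each factor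
  have hint_i : ∀ i : Fin d, Integrable (fun ω => rexp (t * X i ω)) μ := by
    intro i
    have h1 : Integrable (fun x => rexp (t * x ^ 2)) (μ.map (fun ω => u ω i)) := by
      rw [hcoord i]; exact aux_integrable_exp_mul_sq_gaussian ht2
    rw [integrable_map_measure (by measurability : Measurable fun x : ℝ => rexp (t * x ^ 2)).aestronglyMeasurable
      (hmeas i).aemeasurable] at h1
    exact h1
  have hmgf_i : ∀ i : Fin d, mgf (X i) μ t = √(1 - 2*t)⁻¹ := by
    intro i
    have h1 : ∫ x, rexp (t * x ^ 2) ∂(μ.map (fun ω => u ω i)) = √(1 - 2*t)⁻¹ := by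
      rw [hcoord i]; exact aux_integral_exp_mul_sq_gaussian ht2
    rw [integral_map (hmeas i).aemeasurable
      (by measurability : Measurable fun x : ℝ => rexp (t * x ^ 2)).aestronglyMeasurable] at h1
    exact h1
  -- mgf of the sum
  have hSmgf : mgf (∑ i, X i) μ t = (√(1 - 2*t)⁻¹) ^ d := by
    rw [hXindep.mgf_sum hXmeas Finset.univ]
    simp [hmgf_i]
  have hSint : Integrable (fun ω => rexp (t * (∑ i, X i) ω)) μ :=
    hXindep.integrable_exp_mul_sum hXmeas (fun i _ => hint_i i)
  have hSapp : ∀ ω, (∑ i, X i) ω = ‖u ω‖ ^ 2 := by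
    intro ω
    rw [hnorm ω, Finset.sum_apply]
  -- the constant
  set C : ℝ := ((d:ℝ) + k) ^ ((k:ℝ)/2) * rexp (-(k:ℝ)/2) with hCdef
  have hC0 : 0 ≤ C := by positivity
  -- pointwise bound
  have hpt : ∀ ω, ‖u ω‖ ^ k ≤ C * rexp (t * (∑ i, X i) ω) := by
    intro ω
    rw [hSapp ω]
    have h1 : ‖u ω‖ ^ k = (‖u ω‖ ^ 2) ^ ((k:ℝ)/2) := by
      rw [← Real.rpow_natCast ‖u ω‖ 2, ← Real.rpow_mul (norm_nonneg _),
        show ((2:ℕ):ℝ) * ((k:ℝ)/2) = (k:ℝ) by push_cast; ring, Real.rpow_natCast]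
    have h2 := aux_rpow_le_exp (y := ‖u ω‖ ^ 2) (a := (k:ℝ)/2) (t := t)
      (by positivity) (by positivity) ht0
    have h3 : ((k:ℝ)/2) / t = (d:ℝ) + k := by
      rw [htdef]; field_simp
    rw [h3] at h2
    rw [h1, hCdef]
    calc (‖u ω‖ ^ 2) ^ ((k:ℝ)/2)
        ≤ ((d:ℝ) + k) ^ ((k:ℝ)/2) * rexp (t * ‖u ω‖ ^ 2 - (k:ℝ)/2) := h2
      _ = ((d:ℝ) + k) ^ ((k:ℝ)/2) * rexp (-(k:ℝ)/2) * rexp (t * ‖u ω‖ ^ 2) := by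
          rw [mul_assoc, ← Real.exp_add]; ring_nf
  -- integrate the bound
  have hmono : ∫ ω, ‖u ω‖ ^ k ∂μ ≤ ∫ ω, C * rexp (t * (∑ i, X i) ω) ∂μ := by
    apply integral_mono_of_nonneg
    · exact Filter.Eventually.of_forall fun ω => by positivity
    · exact hSint.const_mul C
    · exact Filter.Eventually.of_forall hpt
  rw [integral_const_mul] at hmono
  have hmgfval : ∫ ω, rexp (t * (∑ i, X i) ω) ∂μ = (√(1 - 2*t)⁻¹) ^ d := hSmgf
  rw [hmgfval] at hmono
  refine hmono.trans ?_
  -- final arithmetic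
  have hsq : (√(1 - 2*t)⁻¹) ^ d = (((d:ℝ) + k) / d) ^ ((d:ℝ)/2) := by
    rw [h1t]
    have h4 : ((d:ℝ) / (d + k))⁻¹ = ((d:ℝ) + k) / d := by
      rw [inv_div]
    rw [h4, Real.sqrt_eq_rpow, ← Real.rpow_natCast (_ ^ (1/2 : ℝ)) d,
      ← Real.rpow_mul (by positivity)]
    congr 1
    ring
  rw [hsq, hCdef]
  have h5 : (((d:ℝ) + k) / d) ^ ((d:ℝ)/2) ≤ rexp ((k:ℝ)/2) := by
    have h6 : ((d:ℝ) + k) / d ≤ rexp ((k:ℝ)/d) := by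
      have := Real.add_one_le_exp ((k:ℝ)/d)
      calc ((d:ℝ) + k) / d = (k:ℝ)/d + 1 := by field_simp; ring
        _ ≤ rexp ((k:ℝ)/d) := this
    calc (((d:ℝ) + k) / d) ^ ((d:ℝ)/2) ≤ (rexp ((k:ℝ)/d)) ^ ((d:ℝ)/2) := by
          apply Real.rpow_le_rpow (by positivity) h6 (by positivity)
      _ = rexp ((k:ℝ)/2) := by
          rw [← Real.exp_mul]
          congr 1
          field_simp
  calc ((d:ℝ) + k) ^ ((k:ℝ)/2) * rexp (-(k:ℝ)/2) * (((d:ℝ) + k) / d) ^ ((d:ℝ)/2)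
      ≤ ((d:ℝ) + k) ^ ((k:ℝ)/2) * rexp (-(k:ℝ)/2) * rexp ((k:ℝ)/2) := by
        apply mul_le_mul_of_nonneg_left h5 (by positivity)
    _ = ((d:ℝ) + k) ^ ((k:ℝ)/2) := by
        rw [mul_assoc, ← Real.exp_add,
          show -(k:ℝ)/2 + (k:ℝ)/2 = 0 by ring, Real.exp_zero, mul_one]
end

section
/- Let g, H ∈ R^d and a symmetric d×d matrix respectively, M > 0, and let h* minimize m(h) = gᵀh + (1/2)hᵀHh + (M/6)||h||³ over h ∈ R^d. Then g + Hh* + (M/2)||h*|| h* = 0 and H + (M/2)||h*|| I is positive semidefinite. -/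
open scoped RealInnerProductSpace

theorem cubic_aux {E : Type*} [NormedAddCommGroup E] [InnerProductSpace ℝ E]
    [CompleteSpace E] (g : E) (H : E →L[ℝ] E) (hH : IsSelfAdjoint H)
    (M : ℝ) (hM : 0 < M) (hstar : E)
    (hmin : ∀ h : E,
      ⟪g, hstar⟫ + (1/2) * ⟪hstar, H hstar⟫ + M/6 * ‖hstar‖ ^ 3 ≤
        ⟪g, h⟫ + (1/2) * ⟪h, H h⟫ + M/6 * ‖h‖ ^ 3) :
    g + H hstar + (M/2 * ‖hstar‖) • hstar = 0 ∧
      ∀ v : E, 0 ≤ ⟪v, H v⟫ + M/2 * ‖hstar‖ * ‖v‖ ^ 2 := by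
  have hsym : ∀ x y : E, ⟪H x, y⟫ = ⟪x, H y⟫ :=
    fun x y => ContinuousLinearMap.isSelfAdjoint_iff_isSymmetric.mp hH x y
  -- first-order condition
  have h1 : HasFDerivAt (fun h : E => ⟪g, h⟫) (innerSL ℝ g) hstar :=
    (innerSL ℝ g).hasFDerivAt
  have h2 := ((hasFDerivAt_id (𝕜 := ℝ) hstar).inner ℝ (H.hasFDerivAt)).const_mul (1/2 : ℝ)
  have hq : HasFDerivAt (fun h : E => ⟪h, h⟫)
      ((fderivInnerCLM ℝ (hstar, hstar)).comp
        ((ContinuousLinearMap.id ℝ E).prod (ContinuousLinearMap.id ℝ E))) hstar :=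
    (hasFDerivAt_id (𝕜 := ℝ) hstar).inner ℝ (hasFDerivAt_id hstar)
  have hrpow : HasDerivAt (fun t : ℝ => t ^ (3/2 : ℝ))
      ((3/2 : ℝ) * (⟪hstar, hstar⟫ : ℝ) ^ ((3/2 : ℝ) - 1)) ⟪hstar, hstar⟫ :=
    Real.hasDerivAt_rpow_const (Or.inr (by norm_num))
  have h3 := (hrpow.comp_hasFDerivAt (f := fun h : E => ⟪h, h⟫) hstar hq).const_mul (M/6 : ℝ)
  have htot := (h1.add h2).add h3
  have hcube : ∀ h : E, ((fun t : ℝ => t ^ (3/2 : ℝ)) ∘ fun h : E => ⟪h, h⟫) h = ‖h‖ ^ 3 := by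
    intro h
    simp only [Function.comp_apply, real_inner_self_eq_norm_sq]
    rw [← Real.rpow_natCast ‖h‖ 2, ← Real.rpow_mul (norm_nonneg _),
      show ((2:ℕ):ℝ) * (3/2 : ℝ) = ((3:ℕ):ℝ) by norm_num, Real.rpow_natCast]
  have htot' : HasFDerivAt (fun h : E => ⟪g, h⟫ + (1/2) * ⟪h, H h⟫ + M/6 * ‖h‖ ^ 3)
      (innerSL ℝ g +
        (1/2 : ℝ) • (fderivInnerCLM ℝ (id hstar, H hstar)).comp
          ((ContinuousLinearMap.id ℝ E).prod H) +
        (M/6 : ℝ) • ((3/2 : ℝ) * (⟪hstar, hstar⟫ : ℝ) ^ ((3/2 : ℝ) - 1)) •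
          ((fderivInnerCLM ℝ (hstar, hstar)).comp
            ((ContinuousLinearMap.id ℝ E).prod (ContinuousLinearMap.id ℝ E)))) hstar := by
    refine htot.congr_of_eventuallyEq (Filter.Eventually.of_forall fun h => ?_)
    show _ = _ + _ * ((fun t : ℝ => t ^ (3/2 : ℝ)) ∘ fun h : E => ⟪h, h⟫) h
    rw [hcube h]
    simp
  have hloc : IsLocalMin (fun h : E => ⟪g, h⟫ + (1/2) * ⟪h, H h⟫ + M/6 * ‖h‖ ^ 3) hstar :=
    Filter.Eventually.of_forall fun h => hmin h
  have hz := hloc.hasFDerivAt_eq_zero htot'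
  have hpow : (⟪hstar, hstar⟫ : ℝ) ^ ((3/2 : ℝ) - 1) = ‖hstar‖ := by
    rw [real_inner_self_eq_norm_sq, ← Real.rpow_natCast ‖hstar‖ 2,
      ← Real.rpow_mul (norm_nonneg _),
      show ((2:ℕ):ℝ) * ((3/2 : ℝ) - 1) = ((1:ℕ):ℝ) by norm_num, Real.rpow_natCast, pow_one]
  have key : ∀ v : E, ⟪g, v⟫ + ⟪H hstar, v⟫ + (M/2 * ‖hstar‖) * ⟪hstar, v⟫ = 0 := by
    intro v
    have h0 := congrArg (fun L : E →L[ℝ] ℝ => L v) hz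
    simp only [ContinuousLinearMap.add_apply, ContinuousLinearMap.smul_apply,
      ContinuousLinearMap.comp_apply, ContinuousLinearMap.prod_apply,
      ContinuousLinearMap.coe_id', id_eq, fderivInnerCLM_apply, innerSL_apply_apply,
      ContinuousLinearMap.zero_apply, smul_eq_mul, hpow] at h0
    have hs1 : (⟪v, H hstar⟫ : ℝ) = ⟪H hstar, v⟫ := real_inner_comm (H hstar) v
    have hs2 : (⟪hstar, H v⟫ : ℝ) = ⟪H hstar, v⟫ := (hsym hstar v).symm
    have hs3 : (⟪v, hstar⟫ : ℝ) = ⟪hstar, v⟫ := real_inner_comm hstar v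
    linear_combination h0 - (1/2)*hs2 - (1/2)*hs1 - (M/4*‖hstar‖)*hs3
  have first : g + H hstar + (M/2 * ‖hstar‖) • hstar = 0 := by
    have h0 := key (g + H hstar + (M/2 * ‖hstar‖) • hstar)
    rw [show ⟪g, g + H hstar + (M/2*‖hstar‖) • hstar⟫ + ⟪H hstar, g + H hstar + (M/2*‖hstar‖) • hstar⟫
        + (M/2*‖hstar‖) * ⟪hstar, g + H hstar + (M/2*‖hstar‖) • hstar⟫
        = ⟪g + H hstar + (M/2*‖hstar‖) • hstar, g + H hstar + (M/2*‖hstar‖) • hstar⟫ by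
      rw [inner_add_left, inner_add_left, real_inner_smul_left]] at h0
    rwa [inner_self_eq_zero] at h0
  refine ⟨first, ?_⟩
  clear h1 h2 hq hrpow h3 htot hcube htot' hloc hz hpow
  -- key inequality from global optimality + first-order condition
  have keyineq : ∀ u : E, 0 ≤ (1/2) * ⟪u, H u⟫ - (M/2 * ‖hstar‖) * ⟪hstar, u⟫
      + M/6 * (‖hstar + u‖ ^ 3 - ‖hstar‖ ^ 3) := by
    intro u
    have h0 := hmin (hstar + u)
    have hg := key u
    have e1 : ⟪g, hstar + u⟫ = ⟪g, hstar⟫ + ⟪g, u⟫ := inner_add_right _ _ _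
    have e2 : ⟪hstar + u, H (hstar + u)⟫
        = ⟪hstar, H hstar⟫ + 2 * ⟪H hstar, u⟫ + ⟪u, H u⟫ := by
      simp only [map_add, inner_add_left, inner_add_right]
      linarith [hsym hstar u, real_inner_comm (H hstar) u]
    rw [e1, e2] at h0
    nlinarith [h0, hg]
  have hq_neg : ∀ v : E, ⟪hstar, v⟫ < 0 → 0 ≤ ⟪v, H v⟫ + M/2 * ‖hstar‖ * ‖v‖ ^ 2 := by
    intro v hc
    have hvne : v ≠ 0 := by
      intro h; rw [h, inner_zero_right] at hc; exact lt_irrefl 0 hc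
    have hv2 : (0:ℝ) < ‖v‖ ^ 2 := pow_pos (norm_pos_iff.mpr hvne) 2
    obtain ⟨t, ht, htc⟩ : ∃ t : ℝ, 0 < t ∧ t * ‖v‖ ^ 2 = -2 * ⟪hstar, v⟫ :=
      ⟨-2 * ⟪hstar, v⟫ / ‖v‖ ^ 2, div_pos (by linarith) hv2,
        div_mul_cancel₀ _ (ne_of_gt hv2)⟩
    have hnormsq : ‖hstar + t • v‖ ^ 2 = ‖hstar‖ ^ 2 := by
      rw [norm_add_sq_real, real_inner_smul_right, norm_smul, mul_pow]
      rw [Real.norm_eq_abs, abs_of_pos ht]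
      nlinarith [htc]
    have hnorm : ‖hstar + t • v‖ = ‖hstar‖ := by
      have := congrArg Real.sqrt hnormsq
      rwa [Real.sqrt_sq (norm_nonneg _), Real.sqrt_sq (norm_nonneg _)] at this
    have hk := keyineq (t • v)
    rw [hnorm] at hk
    simp only [map_smul, real_inner_smul_left, real_inner_smul_right, smul_eq_mul] at hk
    have htc2 : t * (t * ‖v‖ ^ 2) = t * (-2 * ⟪hstar, v⟫) := by rw [htc]
    have e3 : (M/2 * ‖hstar‖) * (t * ⟪hstar, v⟫) = -(M/4 * ‖hstar‖) * (t * (t * ‖v‖ ^ 2)) := by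
      rw [htc2]; ring
    have ht2 : (0:ℝ) < t ^ 2 := pow_pos ht 2
    have h5 : 0 ≤ t ^ 2 * (⟪v, H v⟫ + M/2 * ‖hstar‖ * ‖v‖ ^ 2) := by linarith [hk, e3]
    exact le_of_mul_le_mul_left (by linarith [h5]) ht2
  have hqcont : Continuous fun w : E => ⟪w, H w⟫ + M/2 * ‖hstar‖ * ‖w‖ ^ 2 := by
    exact (continuous_id.inner H.continuous).add
      (continuous_const.mul (continuous_norm.pow 2))
  intro v
  rcases lt_trichotomy (⟪hstar, v⟫ : ℝ) 0 with hc | hc | hc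
  · exact hq_neg v hc
  · -- boundary case: approximate by v - ε • hstar
    by_cases hr0 : ‖hstar‖ = 0
    · -- hstar = 0
      have hstar0 : hstar = 0 := norm_eq_zero.mp hr0
      have hlim : Filter.Tendsto (fun t : ℝ => (1/2) * ⟪v, H v⟫ + M/6 * t * ‖v‖ ^ 3)
          (nhdsWithin 0 (Set.Ioi 0)) (nhds ((1/2) * ⟪v, H v⟫)) := by
        have : Continuous fun t : ℝ => (1/2) * ⟪v, H v⟫ + M/6 * t * ‖v‖ ^ 3 := by continuity
        have h2 := (this.tendsto 0).mono_left (nhdsWithin_le_nhds (s := Set.Ioi (0:ℝ)))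
        simpa using h2
      have hev : ∀ᶠ t in nhdsWithin (0:ℝ) (Set.Ioi 0),
          0 ≤ (1/2) * ⟪v, H v⟫ + M/6 * t * ‖v‖ ^ 3 := by
        filter_upwards [self_mem_nhdsWithin] with t ht
        have ht : (0:ℝ) < t := ht
        have hk := keyineq (t • v)
        rw [hstar0] at hk
        simp only [inner_zero_left, zero_add, norm_zero, mul_zero, sub_zero] at hk
        simp only [map_smul, real_inner_smul_left, real_inner_smul_right, smul_eq_mul,
          norm_smul, Real.norm_eq_abs, abs_of_pos ht, mul_pow] at hk
        nlinarith [hk, mul_pos ht ht]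
      have := ge_of_tendsto hlim hev
      rw [hr0]
      nlinarith [this]
    · -- ‖hstar‖ > 0 : perturb
      have hrpos : 0 < ‖hstar‖ := lt_of_le_of_ne (norm_nonneg _) (Ne.symm hr0)
      have hlim : Filter.Tendsto
          (fun ε : ℝ => ⟪v - ε • hstar, H (v - ε • hstar)⟫ + M/2 * ‖hstar‖ * ‖v - ε • hstar‖ ^ 2)
          (nhdsWithin 0 (Set.Ioi 0))
          (nhds (⟪v, H v⟫ + M/2 * ‖hstar‖ * ‖v‖ ^ 2)) := by
        have hcont : Continuous fun ε : ℝ => v - ε • hstar :=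
          continuous_const.sub (continuous_id.smul continuous_const)
        have h2 := ((hqcont.comp hcont).tendsto 0).mono_left
          (nhdsWithin_le_nhds (s := Set.Ioi (0:ℝ)))
        simp only [Function.comp, zero_smul, sub_zero] at h2
        exact h2
      have hev : ∀ᶠ ε in nhdsWithin (0:ℝ) (Set.Ioi 0),
          0 ≤ ⟪v - ε • hstar, H (v - ε • hstar)⟫ + M/2 * ‖hstar‖ * ‖v - ε • hstar‖ ^ 2 := by
        filter_upwards [self_mem_nhdsWithin] with ε hε
        have hε : (0:ℝ) < ε := hε
        apply hq_neg
        rw [inner_sub_right, real_inner_smul_right, hc, real_inner_self_eq_norm_sq]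
        have : 0 < ε * ‖hstar‖ ^ 2 := by positivity
        linarith
      exact ge_of_tendsto hlim hev
  · -- positive inner product: use -v
    have := hq_neg (-v) (by rw [inner_neg_right]; linarith)
    rw [map_neg, inner_neg_neg, norm_neg] at this
    exact this

/-- Nesterov–Polyak optimality conditions for the cubic-regularized Newton subproblem:
if `h*` minimizes `m(h) = ⟨g,h⟩ + (1/2)⟨h,Hh⟩ + (M/6)‖h‖³`, then
`g + Hh* + (M/2)‖h*‖h* = 0` and `H + (M/2)‖h*‖ I ⪰ 0`. -/
theorem cubic_subproblem_optimality {d : ℕ} (g : EuclideanSpace ℝ (Fin d))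
    (H : EuclideanSpace ℝ (Fin d) →L[ℝ] EuclideanSpace ℝ (Fin d))
    (hH : IsSelfAdjoint H) (M : ℝ) (hM : 0 < M) (hstar : EuclideanSpace ℝ (Fin d))
    (hmin : ∀ h : EuclideanSpace ℝ (Fin d),
      ⟪g, hstar⟫ + (1/2) * ⟪hstar, H hstar⟫ + M/6 * ‖hstar‖ ^ 3 ≤
        ⟪g, h⟫ + (1/2) * ⟪h, H h⟫ + M/6 * ‖h‖ ^ 3) :
    g + H hstar + (M/2 * ‖hstar‖) • hstar = 0 ∧
      ∀ v : EuclideanSpace ℝ (Fin d), 0 ≤ ⟪v, H v⟫ + M/2 * ‖hstar‖ * ‖v‖ ^ 2 := by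
  exact cubic_aux g H hH M hM hstar hmin
end

section
/- Let g ∈ R^d, H a symmetric d×d matrix, M > 0, and let h* be a global minimizer of m(h) = gᵀh + (1/2)hᵀHh + (M/6)||h||³. Then m(h*) − m(0) ≤ −(M/12)||h*||³. -/
open scoped RealInnerProductSpace

/-- One-dimensional core of Lemma B.2: if `t = 1` minimizes
`φ(t) = a t + (B/2) t² + c |t|³` over `ℝ` with `c ≥ 0`, then `φ(1) ≤ -c/2`. -/
lemma cubic_oned (a B c : ℝ) (hc : 0 ≤ c)
    (key : ∀ t : ℝ, a + B/2 + c ≤ t*a + t^2*(B/2) + |t|^3*c) :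
    a + B/2 + c ≤ -c/2 := by
  have ha : a ≤ 0 := by
    have h := key (-1)
    rw [abs_neg, abs_one] at h
    nlinarith
  obtain ⟨K, hK⟩ : ∃ K : ℝ, K = |B/2 + 3*c| + c := ⟨_, rfl⟩
  have hK0 : 0 ≤ K := by rw [hK]; positivity
  have hcK : c ≤ K := by nlinarith [abs_nonneg (B/2+3*c)]
  have habs1 : B/2 + 3*c ≤ K := by nlinarith [le_abs_self (B/2+3*c)]
  have habs2 : -K ≤ B/2 + 3*c := by nlinarith [neg_abs_le (B/2+3*c)]
  have bound : ∀ δ : ℝ, 0 < δ → δ ≤ 1/2 →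
      -(δ^2*(2*K)) ≤ δ*(a+B+3*c) ∧ δ*(a+B+3*c) ≤ δ^2*K := by
    intro δ hδpos hδ1
    constructor
    · have h := key (1 + δ)
      rw [abs_of_pos (by linarith : (0:ℝ) < 1 + δ)] at h
      have step1 : -(δ^2*(B/2+3*c)) - δ^3*c ≤ δ*(a+B+3*c) := by nlinarith [h]
      have e2 : δ^2*(B/2+3*c) ≤ δ^2*K :=
        mul_le_mul_of_nonneg_left habs1 (sq_nonneg δ)
      have e3 : δ^3*c ≤ δ^2*K := by
        nlinarith [mul_nonneg (sq_nonneg δ) (sub_nonneg.mpr hcK),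
          mul_nonneg (mul_nonneg (sq_nonneg δ) hc) (by linarith : (0:ℝ) ≤ 1 - δ)]
      linarith
    · have h := key (1 - δ)
      rw [abs_of_pos (by linarith : (0:ℝ) < 1 - δ)] at h
      have step1 : δ*(a+B+3*c) ≤ δ^2*(B/2+3*c) - δ^3*c := by nlinarith [h]
      have e2 : δ^2*(B/2+3*c) ≤ δ^2*K :=
        mul_le_mul_of_nonneg_left habs1 (sq_nonneg δ)
      have e3 : 0 ≤ δ^3*c := by positivity
      linarith
  have hDz : a + B + 3*c = 0 := by
    have h1 : ∀ ε : ℝ, 0 < ε → -ε ≤ a + B + 3*c ∧ a + B + 3*c ≤ ε := by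
      intro ε hε
      set δ : ℝ := min (1/2) (ε/(2*K+2)) with hδ
      have hδpos : 0 < δ := lt_min (by norm_num) (by positivity)
      have hδ1 : δ ≤ 1/2 := min_le_left _ _
      have hδε : δ * (2*K+2) ≤ ε := by
        have := min_le_right (1/2 : ℝ) (ε/(2*K+2))
        calc δ * (2*K+2) ≤ ε/(2*K+2) * (2*K+2) :=
              mul_le_mul_of_nonneg_right this (by positivity)
          _ = ε := by field_simp
      obtain ⟨b1, b2⟩ := bound δ hδpos hδ1
      have hδK : δ * (2*K) ≤ ε := by nlinarith
      have key2 : δ^2*(2*K) ≤ δ*ε := by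
        calc δ^2*(2*K) = δ * (δ*(2*K)) := by ring
          _ ≤ δ * ε := mul_le_mul_of_nonneg_left hδK hδpos.le
      have key3 : δ^2*K ≤ δ*ε := by nlinarith [mul_nonneg (sq_nonneg δ) hK0]
      constructor
      · have : δ*(-ε) ≤ δ*(a+B+3*c) := by nlinarith
        nlinarith [le_of_mul_le_mul_left this hδpos]
      · have : δ*(a+B+3*c) ≤ δ*ε := by nlinarith
        nlinarith [le_of_mul_le_mul_left this hδpos]
    have hge : 0 ≤ a + B + 3*c := by
      apply le_of_forall_pos_le_add
      intro ε hε
      linarith [(h1 ε hε).1]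
    have hle : a + B + 3*c ≤ 0 := by
      have : a + B + 3*c ≤ 0 + 0 := le_of_forall_pos_le_add
        (fun ε hε => by linarith [(h1 ε hε).2])
      linarith
    linarith
  linarith

/-- Lemma B.2: the decrease of the cubic-regularized Newton model at its global minimizer
satisfies `m(h*) − m(0) ≤ −(M/12)‖h*‖³`. -/
theorem cubic_model_descent {d : ℕ} (g : EuclideanSpace ℝ (Fin d))
    (H : EuclideanSpace ℝ (Fin d) →L[ℝ] EuclideanSpace ℝ (Fin d))
    (hH : IsSelfAdjoint H) (M : ℝ) (hM : 0 < M) (hstar : EuclideanSpace ℝ (Fin d))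
    (hmin : ∀ h : EuclideanSpace ℝ (Fin d),
      ⟪g, hstar⟫ + (1/2) * ⟪hstar, H hstar⟫ + M/6 * ‖hstar‖ ^ 3 ≤
        ⟪g, h⟫ + (1/2) * ⟪h, H h⟫ + M/6 * ‖h‖ ^ 3) :
    (⟪g, hstar⟫ + (1/2) * ⟪hstar, H hstar⟫ + M/6 * ‖hstar‖ ^ 3) -
      (⟪g, (0 : EuclideanSpace ℝ (Fin d))⟫ +
        (1/2) * ⟪(0 : EuclideanSpace ℝ (Fin d)), H 0⟫ + M/6 * ‖(0 : EuclideanSpace ℝ (Fin d))‖ ^ 3) ≤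
      -(M/12) * ‖hstar‖ ^ 3 := by
  set a : ℝ := ⟪g, hstar⟫ with ha
  set B : ℝ := ⟪hstar, H hstar⟫ with hB
  set c : ℝ := M/6 * ‖hstar‖ ^ 3 with hc
  have hc0 : 0 ≤ c := by positivity
  have key : ∀ t : ℝ, a + B/2 + c ≤ t*a + t^2*(B/2) + |t|^3*c := by
    intro t
    have h := hmin (t • hstar)
    have h1 : ⟪g, t • hstar⟫ = t * a := real_inner_smul_right g hstar t
    have h2 : ⟪t • hstar, H (t • hstar)⟫ = t^2 * B := by
      rw [map_smul, real_inner_smul_left, real_inner_smul_right]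
      ring
    have h3 : ‖t • hstar‖ ^ 3 = |t|^3 * ‖hstar‖ ^ 3 := by
      rw [norm_smul, Real.norm_eq_abs, mul_pow]
    rw [h1, h2, h3] at h
    calc a + B/2 + c ≤ t * a + 1/2 * (t^2 * B) + M/6 * (|t|^3 * ‖hstar‖^3) := by
          linarith [h]
      _ = t*a + t^2*(B/2) + |t|^3*c := by rw [hc]; ring
  have main := cubic_oned a B c hc0 key
  have hz1 : ⟪g, (0 : EuclideanSpace ℝ (Fin d))⟫ = 0 := inner_zero_right g
  have hz2 : ⟪(0 : EuclideanSpace ℝ (Fin d)), H 0⟫ = 0 := inner_zero_left _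
  rw [hz1, hz2, norm_zero]
  have : -(M/12) * ‖hstar‖ ^ 3 = -c/2 := by rw [hc]; ring
  rw [this]
  norm_num
  linarith
end

section
/- Let f be twice differentiable with L_H-Lipschitz Hessian, let x ∈ R^d, and let H be a symmetric matrix, M > 0, and h* a vector satisfying H + (M/2)||h*||I ⪰ 0. Then λ_min(∇²f(x + h*)) ≥ −||∇²f(x) − H|| − (L_H + M/2)||h*||, i.e., ||h*|| ≥ (2/(M + 2L_H)) (−||∇²f(x) − H|| − λ_min(∇²f(x + h*))) when the right-hand side is nonnegative. -/
open scoped RealInnerProductSpace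

/-- Step-norm lower bound from Lemma B.4: if `f` has `L_H`-Lipschitz Hessian `hess`,
and `H + (M/2)‖h*‖ I ⪰ 0`, then
`λ_min(∇²f(x+h*)) ≥ −‖∇²f(x) − H‖ − (L_H + M/2)‖h*‖`, i.e.
`‖h*‖ ≥ (2/(M+2L_H))(−‖∇²f(x) − H‖ − λ_min(∇²f(x+h*)))` when the RHS is nonnegative. -/
theorem cubic_step_norm_lower_bound {d : ℕ} (hd : 0 < d)
    (f : EuclideanSpace ℝ (Fin d) → ℝ)
    (g : EuclideanSpace ℝ (Fin d) → EuclideanSpace ℝ (Fin d))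
    (hess : EuclideanSpace ℝ (Fin d) → (EuclideanSpace ℝ (Fin d) →L[ℝ] EuclideanSpace ℝ (Fin d)))
    (hgrad : ∀ y, HasGradientAt f (g y) y)
    (hhess : ∀ y, HasFDerivAt g (hess y) y)
    (L_H : ℝ) (hLH : 0 ≤ L_H)
    (hlip : ∀ a b, ‖hess a - hess b‖ ≤ L_H * ‖a - b‖)
    (x : EuclideanSpace ℝ (Fin d))
    (H : EuclideanSpace ℝ (Fin d) →L[ℝ] EuclideanSpace ℝ (Fin d)) (hH : IsSelfAdjoint H)
    (M : ℝ) (hM : 0 < M) (hstar : EuclideanSpace ℝ (Fin d))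
    (hpsd : ∀ v : EuclideanSpace ℝ (Fin d), 0 ≤ ⟪v, H v⟫ + M/2 * ‖hstar‖ * ‖v‖ ^ 2) :
    (∀ v : EuclideanSpace ℝ (Fin d), ‖v‖ = 1 →
      -‖hess x - H‖ - (L_H + M/2) * ‖hstar‖ ≤ ⟪v, hess (x + hstar) v⟫) ∧
    (0 ≤ -‖hess x - H‖ -
        (⨅ v : {v : EuclideanSpace ℝ (Fin d) // ‖v‖ = 1}, ⟪v.1, hess (x + hstar) v.1⟫) →
      2 / (M + 2 * L_H) * (-‖hess x - H‖ -
        (⨅ v : {v : EuclideanSpace ℝ (Fin d) // ‖v‖ = 1}, ⟪v.1, hess (x + hstar) v.1⟫)) ≤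
        ‖hstar‖) := by
  have key : ∀ v : EuclideanSpace ℝ (Fin d), ‖v‖ = 1 →
      -‖hess x - H‖ - (L_H + M/2) * ‖hstar‖ ≤ ⟪v, hess (x + hstar) v⟫ := by
    intro v hv
    have h1 : |⟪v, (hess x - H) v⟫| ≤ ‖hess x - H‖ := by
      calc |⟪v, (hess x - H) v⟫| ≤ ‖v‖ * ‖(hess x - H) v‖ := abs_real_inner_le_norm _ _
        _ ≤ ‖v‖ * (‖hess x - H‖ * ‖v‖) :=
            mul_le_mul_of_nonneg_left ((hess x - H).le_opNorm v) (norm_nonneg v)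
        _ = ‖hess x - H‖ := by rw [hv]; ring
    have hl : ‖hess (x + hstar) - hess x‖ ≤ L_H * ‖hstar‖ := by
      have := hlip (x + hstar) x
      rwa [add_sub_cancel_left] at this
    have h2 : |⟪v, (hess (x + hstar) - hess x) v⟫| ≤ L_H * ‖hstar‖ := by
      calc |⟪v, (hess (x + hstar) - hess x) v⟫|
          ≤ ‖v‖ * ‖(hess (x + hstar) - hess x) v‖ := abs_real_inner_le_norm _ _
        _ ≤ ‖v‖ * ((L_H * ‖hstar‖) * ‖v‖) :=
            mul_le_mul_of_nonneg_left
              (((hess (x + hstar) - hess x).le_opNorm v).trans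
                (mul_le_mul_of_nonneg_right hl (norm_nonneg v))) (norm_nonneg v)
        _ = L_H * ‖hstar‖ := by rw [hv]; ring
    have h3 := hpsd v
    rw [hv] at h3
    have decomp : ⟪v, hess (x + hstar) v⟫ = ⟪v, H v⟫ + ⟪v, (hess x - H) v⟫
        + ⟪v, (hess (x + hstar) - hess x) v⟫ := by
      simp [ContinuousLinearMap.sub_apply, inner_sub_right]
    have a1 := abs_le.mp h1
    have a2 := abs_le.mp h2
    rw [decomp]
    simp only [one_pow, mul_one] at h3
    linarith [a1.1, a2.1]
  refine ⟨key, fun _ => ?_⟩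
  have hne : Nonempty {v : EuclideanSpace ℝ (Fin d) // ‖v‖ = 1} :=
    ⟨⟨EuclideanSpace.single ⟨0, hd⟩ (1 : ℝ), by simp⟩⟩
  have hinf : -‖hess x - H‖ - (L_H + M/2) * ‖hstar‖ ≤
      ⨅ v : {v : EuclideanSpace ℝ (Fin d) // ‖v‖ = 1}, ⟪v.1, hess (x + hstar) v.1⟫ :=
    le_ciInf fun v => key v.1 v.2
  set lam := ⨅ v : {v : EuclideanSpace ℝ (Fin d) // ‖v‖ = 1}, ⟪v.1, hess (x + hstar) v.1⟫
  have hpos : 0 < M + 2 * L_H := by linarith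
  have hstep : -‖hess x - H‖ - lam ≤ (L_H + M/2) * ‖hstar‖ := by linarith
  have hmul := mul_le_mul_of_nonneg_left hstep (by positivity : (0:ℝ) ≤ 2 / (M + 2 * L_H))
  have heq : 2 / (M + 2 * L_H) * ((L_H + M/2) * ‖hstar‖) = ‖hstar‖ := by
    field_simp
    ring
  linarith
end

section
/- Let Z be a nonnegative random variable and suppose there exist constants C ≥ 1 (with P(Z ≥ τ) ≤ 4d·exp(−b·τ^{2/3}) for all τ ≥ 0, where b > 0 and d ≥ 1). Then for every s > 0, E[exp(s·Z^{1/3})] ≤ 9d·exp(s²/b). -/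
open MeasureTheory Set

private lemma numeric_aux {b s : ℝ} (hb : 0 < b) (hs : 0 < s) :
    s * Real.sqrt (Real.pi / b) * Real.exp (s ^ 2 / (4 * b)) ≤ 2 * Real.exp (s ^ 2 / b) := by
  have hsb : 0 < Real.sqrt b := Real.sqrt_pos.2 hb
  have hpi : Real.sqrt Real.pi ≤ 2 := by
    have h4 : Real.sqrt Real.pi ≤ Real.sqrt 4 := Real.sqrt_le_sqrt Real.pi_le_four
    have : Real.sqrt 4 = 2 := by
      rw [show (4:ℝ) = 2 ^ 2 by norm_num, Real.sqrt_sq (by norm_num : (0:ℝ) ≤ 2)]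
    linarith
  have h1 : Real.sqrt (Real.pi / b) ≤ 2 / Real.sqrt b := by
    rw [Real.sqrt_div Real.pi_nonneg]
    gcongr
  have hsq : (s / Real.sqrt b) ^ 2 = s ^ 2 / b := by
    rw [div_pow, Real.sq_sqrt hb.le]
  have h2 : s / Real.sqrt b ≤ Real.exp (s ^ 2 / (2 * b)) := by
    have hx : s / Real.sqrt b ≤ (s / Real.sqrt b) ^ 2 / 2 + 1 := by
      nlinarith [sq_nonneg (s / Real.sqrt b - 1)]
    have he : (s / Real.sqrt b) ^ 2 / 2 + 1 ≤ Real.exp ((s / Real.sqrt b) ^ 2 / 2) := by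
      simpa [add_comm] using Real.add_one_le_exp ((s / Real.sqrt b) ^ 2 / 2)
    have : (s / Real.sqrt b) ^ 2 / 2 = s ^ 2 / (2 * b) := by rw [hsq]; ring
    linarith [this ▸ (hx.trans he)]
  have hexp_pos : (0:ℝ) < Real.exp (s ^ 2 / (4 * b)) := Real.exp_pos _
  have step1 : s * Real.sqrt (Real.pi / b) * Real.exp (s ^ 2 / (4 * b))
      ≤ 2 * (s / Real.sqrt b) * Real.exp (s ^ 2 / (4 * b)) := by
    have : s * Real.sqrt (Real.pi / b) ≤ 2 * (s / Real.sqrt b) := by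
      have := mul_le_mul_of_nonneg_left h1 hs.le
      calc s * Real.sqrt (Real.pi / b) ≤ s * (2 / Real.sqrt b) := this
        _ = 2 * (s / Real.sqrt b) := by ring
    exact mul_le_mul_of_nonneg_right this hexp_pos.le
  have step2 : 2 * (s / Real.sqrt b) * Real.exp (s ^ 2 / (4 * b))
      ≤ 2 * Real.exp (s ^ 2 / (2 * b)) * Real.exp (s ^ 2 / (4 * b)) := by
    have h2' : 2 * (s / Real.sqrt b) ≤ 2 * Real.exp (s ^ 2 / (2 * b)) := by linarith
    exact mul_le_mul_of_nonneg_right h2' hexp_pos.le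
  have step3 : 2 * Real.exp (s ^ 2 / (2 * b)) * Real.exp (s ^ 2 / (4 * b))
      ≤ 2 * Real.exp (s ^ 2 / b) := by
    rw [mul_assoc, ← Real.exp_add]
    have harg : s ^ 2 / (2 * b) + s ^ 2 / (4 * b) ≤ s ^ 2 / b := by
      rw [div_add_div _ _ (by positivity) (by positivity), div_le_div_iff₀ (by positivity) hb]
      nlinarith [mul_nonneg (sq_nonneg s) (sq_nonneg b)]
    exact mul_le_mul_of_nonneg_left (Real.exp_le_exp.2 harg) (by norm_num)
  linarith

/-- MGF bound for a (2/3)-sub-exponential nonnegative random variable (from Lemma A.2):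
if `P(Z ≥ τ) ≤ 4d·exp(−b τ^{2/3})` then `E[exp(s Z^{1/3})] ≤ 9d·exp(s²/b)`. -/
theorem subexp_mgf_bound {Ω : Type*} [MeasurableSpace Ω]
    (μ : Measure Ω) [IsProbabilityMeasure μ]
    (Z : Ω → ℝ) (hZ : ∀ ω, 0 ≤ Z ω) (d : ℕ) (hd : 1 ≤ d) (b : ℝ) (hb : 0 < b)
    (htail : ∀ τ : ℝ, 0 ≤ τ →
      (μ {ω | τ ≤ Z ω}).toReal ≤ 4 * d * Real.exp (-b * τ ^ ((2:ℝ)/3))) :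
    ∀ s : ℝ, 0 < s →
      ∫ ω, Real.exp (s * (Z ω) ^ ((1:ℝ)/3)) ∂μ ≤ 9 * d * Real.exp (s ^ 2 / b) := by
  intro s hs
  have hd1 : (1:ℝ) ≤ (d:ℝ) := by exact_mod_cast hd
  by_cases hInt : Integrable (fun ω => Real.exp (s * (Z ω) ^ ((1:ℝ)/3))) μ
  case neg =>
    rw [integral_undef hInt]
    positivity
  -- basic facts about f ω = Z ω ^ (1/3)
  have hf0 : ∀ ω, 0 ≤ (Z ω) ^ ((1:ℝ)/3) := fun ω => Real.rpow_nonneg (hZ ω) _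
  have hcube : ∀ ω, ((Z ω) ^ ((1:ℝ)/3)) ^ (3:ℕ) = Z ω := by
    intro ω
    rw [← Real.rpow_natCast ((Z ω) ^ ((1:ℝ)/3)) 3, ← Real.rpow_mul (hZ ω)]
    norm_num
  have f_mble : AEMeasurable (fun ω => (Z ω) ^ ((1:ℝ)/3)) μ := by
    have h1 : AEMeasurable (fun ω => Real.exp (s * (Z ω) ^ ((1:ℝ)/3))) μ :=
      hInt.1.aemeasurable
    have h2 : AEMeasurable
        (fun ω => Real.log (Real.exp (s * (Z ω) ^ ((1:ℝ)/3))) / s) μ :=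
      (Real.measurable_log.comp_aemeasurable h1).div_const s
    have : (fun ω => (Z ω) ^ ((1:ℝ)/3))
        = fun ω => Real.log (Real.exp (s * (Z ω) ^ ((1:ℝ)/3))) / s := by
      funext ω
      rw [Real.log_exp, mul_div_cancel_left₀ _ hs.ne']
    rw [this]
    exact h2
  -- layer cake
  have g_intble : ∀ t > (0:ℝ), IntervalIntegrable (fun u => s * Real.exp (s * u)) volume 0 t :=
    fun t _ => (Continuous.intervalIntegrable (by continuity) 0 t)
  have g_nn : ∀ᵐ t ∂(volume.restrict (Ioi (0:ℝ))), 0 ≤ s * Real.exp (s * t) :=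
    Filter.Eventually.of_forall fun t => by positivity
  have layer := lintegral_comp_eq_lintegral_meas_le_mul μ
    (f := fun ω => (Z ω) ^ ((1:ℝ)/3)) (Filter.Eventually.of_forall hf0) f_mble g_intble g_nn
  -- interval integral computation
  have hIval : ∀ y : ℝ, (∫ t in (0:ℝ)..y, s * Real.exp (s * t)) = Real.exp (s * y) - 1 := by
    intro y
    have hderiv : ∀ x ∈ Set.uIcc (0:ℝ) y,
        HasDerivAt (fun t => Real.exp (s * t)) (s * Real.exp (s * x)) x := by
      intro x _
      have h := ((hasDerivAt_id x).const_mul s).exp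
      simpa [mul_comm] using h
    rw [intervalIntegral.integral_eq_sub_of_hasDerivAt hderiv
      (Continuous.intervalIntegrable (by continuity) 0 y)]
    simp
  have layer' : ∫⁻ ω, ENNReal.ofReal (Real.exp (s * (Z ω) ^ ((1:ℝ)/3)) - 1) ∂μ
      = ∫⁻ t in Ioi (0:ℝ), μ {a | t ≤ (Z a) ^ ((1:ℝ)/3)} * ENNReal.ofReal (s * Real.exp (s * t)) := by
    rw [← layer]
    congr 1
    funext ω
    rw [hIval]
  -- Bochner side
  have hnn1 : ∀ ω, 0 ≤ Real.exp (s * (Z ω) ^ ((1:ℝ)/3)) - 1 := by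
    intro ω
    have : (0:ℝ) ≤ s * (Z ω) ^ ((1:ℝ)/3) := mul_nonneg hs.le (hf0 ω)
    simpa [sub_nonneg] using Real.one_le_exp this
  have hF1 : Integrable (fun ω => Real.exp (s * (Z ω) ^ ((1:ℝ)/3)) - 1) μ :=
    hInt.sub (integrable_const 1)
  have key1 : ∫ ω, Real.exp (s * (Z ω) ^ ((1:ℝ)/3)) ∂μ
      = (∫⁻ ω, ENNReal.ofReal (Real.exp (s * (Z ω) ^ ((1:ℝ)/3)) - 1) ∂μ).toReal + 1 := by
    have heq := integral_eq_lintegral_of_nonneg_ae (μ := μ)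
      (f := fun ω => Real.exp (s * (Z ω) ^ ((1:ℝ)/3)) - 1)
      (Filter.Eventually.of_forall hnn1) hF1.1
    have hsub : ∫ ω, (Real.exp (s * (Z ω) ^ ((1:ℝ)/3)) - 1) ∂μ
        = ∫ ω, Real.exp (s * (Z ω) ^ ((1:ℝ)/3)) ∂μ - 1 := by
      rw [integral_sub hInt (integrable_const 1), integral_const]
      simp
    rw [← heq, hsub]
    ring
  -- tail bound on the lintegral
  set c : ℝ := 4 * (d:ℝ) * s * Real.exp (s ^ 2 / (4 * b)) with hc
  set m : ℝ := s / (2 * b) with hm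
  have hc0 : 0 ≤ c := by rw [hc]; positivity
  have hbound : ∀ t ∈ Ioi (0:ℝ),
      μ {a | t ≤ (Z a) ^ ((1:ℝ)/3)} * ENNReal.ofReal (s * Real.exp (s * t))
        ≤ ENNReal.ofReal (c * Real.exp (-b * (t - m) ^ 2)) := by
    intro t ht
    have ht0 : (0:ℝ) < t := ht
    have hset : {a | t ≤ (Z a) ^ ((1:ℝ)/3)} = {ω | t ^ (3:ℕ) ≤ Z ω} := by
      ext ω
      simp only [Set.mem_setOf_eq]
      conv_rhs => rw [← hcube ω]
      exact (pow_le_pow_iff_left₀ (n := 3) ht0.le (hf0 ω) (by norm_num)).symm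
    have hexp23 : ((t ^ (3:ℕ) : ℝ)) ^ ((2:ℝ)/3) = t ^ 2 := by
      rw [← Real.rpow_natCast t 3, ← Real.rpow_mul ht0.le]
      norm_num
    have htail' : (μ {ω | t ^ (3:ℕ) ≤ Z ω}).toReal ≤ 4 * d * Real.exp (-b * t ^ 2) := by
      have := htail (t ^ (3:ℕ)) (by positivity)
      rwa [hexp23] at this
    have hμ : μ {ω | t ^ (3:ℕ) ≤ Z ω} ≤ ENNReal.ofReal (4 * d * Real.exp (-b * t ^ 2)) := by
      rw [← ENNReal.ofReal_toReal (measure_ne_top μ _)]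
      exact ENNReal.ofReal_le_ofReal htail'
    have hexpalg : (4 * (d:ℝ) * Real.exp (-b * t ^ 2)) * (s * Real.exp (s * t))
        = c * Real.exp (-b * (t - m) ^ 2) := by
      have hee : Real.exp (-b * t ^ 2) * Real.exp (s * t)
          = Real.exp (s ^ 2 / (4 * b)) * Real.exp (-b * (t - m) ^ 2) := by
        rw [← Real.exp_add, ← Real.exp_add]
        congr 1
        rw [hm]
        field_simp
        ring
      rw [hc]
      calc (4 * (d:ℝ) * Real.exp (-b * t ^ 2)) * (s * Real.exp (s * t))
          = 4 * (d:ℝ) * s * (Real.exp (-b * t ^ 2) * Real.exp (s * t)) := by ring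
        _ = 4 * (d:ℝ) * s * Real.exp (s ^ 2 / (4 * b)) * Real.exp (-b * (t - m) ^ 2) := by
            rw [hee]; ring
    rw [hset]
    calc μ {ω | t ^ (3:ℕ) ≤ Z ω} * ENNReal.ofReal (s * Real.exp (s * t))
        ≤ ENNReal.ofReal (4 * d * Real.exp (-b * t ^ 2)) * ENNReal.ofReal (s * Real.exp (s * t)) :=
          mul_le_mul_left hμ _
      _ = ENNReal.ofReal ((4 * d * Real.exp (-b * t ^ 2)) * (s * Real.exp (s * t))) :=
          (ENNReal.ofReal_mul (by positivity)).symm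
      _ = ENNReal.ofReal (c * Real.exp (-b * (t - m) ^ 2)) := by rw [hexpalg]
  -- integrate the bound
  have hInt2 : Integrable (fun t : ℝ => c * Real.exp (-b * (t - m) ^ 2)) volume :=
    ((integrable_exp_neg_mul_sq hb).comp_sub_right m).const_mul c
  have hlin : ∫⁻ t in Ioi (0:ℝ),
      μ {a | t ≤ (Z a) ^ ((1:ℝ)/3)} * ENNReal.ofReal (s * Real.exp (s * t))
        ≤ ENNReal.ofReal (c * Real.sqrt (Real.pi / b)) := by
    calc ∫⁻ t in Ioi (0:ℝ),
        μ {a | t ≤ (Z a) ^ ((1:ℝ)/3)} * ENNReal.ofReal (s * Real.exp (s * t))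
        ≤ ∫⁻ t in Ioi (0:ℝ), ENNReal.ofReal (c * Real.exp (-b * (t - m) ^ 2)) :=
          setLIntegral_mono' measurableSet_Ioi hbound
      _ = ENNReal.ofReal (∫ t in Ioi (0:ℝ), c * Real.exp (-b * (t - m) ^ 2)) :=
          (ofReal_integral_eq_lintegral_ofReal hInt2.integrableOn
            (Filter.Eventually.of_forall fun t => by positivity)).symm
      _ ≤ ENNReal.ofReal (∫ t : ℝ, c * Real.exp (-b * (t - m) ^ 2)) :=
          ENNReal.ofReal_le_ofReal (setIntegral_le_integral hInt2
            (Filter.Eventually.of_forall fun t => by positivity))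
      _ = ENNReal.ofReal (c * Real.sqrt (Real.pi / b)) := by
          rw [MeasureTheory.integral_const_mul,
            integral_sub_right_eq_self (fun t : ℝ => Real.exp (-b * t ^ 2)) m,
            integral_gaussian]
  -- put everything together
  have hfinal : ∫ ω, Real.exp (s * (Z ω) ^ ((1:ℝ)/3)) ∂μ
      ≤ c * Real.sqrt (Real.pi / b) + 1 := by
    rw [key1, layer']
    have htR := ENNReal.toReal_mono (by simp) hlin
    rw [ENNReal.toReal_ofReal (by positivity)] at htR
    linarith
  have hnum : c * Real.sqrt (Real.pi / b) + 1 ≤ 9 * d * Real.exp (s ^ 2 / b) := by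
    have haux := numeric_aux hb hs
    have h1e : (1:ℝ) ≤ Real.exp (s ^ 2 / b) := Real.one_le_exp (by positivity)
    have hcs : c * Real.sqrt (Real.pi / b)
        = 4 * (d:ℝ) * (s * Real.sqrt (Real.pi / b) * Real.exp (s ^ 2 / (4 * b))) := by
      rw [hc]; ring
    rw [hcs]
    nlinarith [mul_le_mul_of_nonneg_left haux (by positivity : (0:ℝ) ≤ 4 * (d:ℝ)),
      mul_le_mul_of_nonneg_left h1e (by linarith : (0:ℝ) ≤ (d:ℝ) - 1)]
  linarith
end

section
/- Let ζ_0, ζ_1, ..., ζ_{t−1} be random vectors in R^d and suppose for each i there exists a tail bound P(||ζ_i|| ≥ τ) ≤ 4d·exp(−b_i τ^{2/3}). Then for any l > 0, with probability at least 1 − e^{−l}, ∑_{i=0}^{t−1}||ζ_i||² ≤ (4∑_{i=0}^{t−1} b_i^{-1} · (t log(9d) + l))³. -/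
open MeasureTheory
open scoped BigOperators

lemma sum_cube_le_cube_sum (s : Finset ℕ) (f : ℕ → ℝ) (hf : ∀ i ∈ s, 0 ≤ f i) :
    ∑ i ∈ s, (f i) ^ 3 ≤ (∑ i ∈ s, f i) ^ 3 := by
  have hS : 0 ≤ ∑ i ∈ s, f i := Finset.sum_nonneg hf
  calc ∑ i ∈ s, (f i) ^ 3 ≤ ∑ i ∈ s, f i * (∑ j ∈ s, f j) ^ 2 := by
        apply Finset.sum_le_sum
        intro i hi
        have h1 : f i ≤ ∑ j ∈ s, f j := Finset.single_le_sum hf hi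
        have h0 := hf i hi
        have h2 : f i ^ 2 ≤ (∑ j ∈ s, f j) ^ 2 := by nlinarith
        calc f i ^ 3 = f i * f i ^ 2 := by ring
          _ ≤ f i * (∑ j ∈ s, f j) ^ 2 := mul_le_mul_of_nonneg_left h2 h0
    _ = (∑ i ∈ s, f i) ^ 3 := by rw [← Finset.sum_mul]; ring

/-- Lemma A.5: high-probability bound for the sum of squared norms of
(2/3)-sub-exponential random vectors. -/
theorem subexp_sum_sq_norm_bound {d : ℕ} (hd : 1 ≤ d) {Ω : Type*} [MeasurableSpace Ω]
    (μ : Measure Ω) [IsProbabilityMeasure μ] (t : ℕ)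
    (ζ : ℕ → Ω → EuclideanSpace ℝ (Fin d)) (b : ℕ → ℝ) (hb : ∀ i, 0 < b i)
    (htail : ∀ i, ∀ τ : ℝ, 0 ≤ τ →
      (μ {ω | τ ≤ ‖ζ i ω‖}).toReal ≤ 4 * d * Real.exp (-(b i) * τ ^ ((2:ℝ)/3))) :
    ∀ l : ℝ, 0 < l →
      1 - Real.exp (-l) ≤
        (μ {ω | ∑ i ∈ Finset.range t, ‖ζ i ω‖ ^ 2 ≤
            (4 * (∑ i ∈ Finset.range t, (b i)⁻¹) * (t * Real.log (9 * d) + l)) ^ 3}).toReal := by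
  intro l hl
  have hd1 : (1:ℝ) ≤ (d:ℝ) := by exact_mod_cast hd
  have hexpl : 0 < Real.exp (-l) := Real.exp_pos _
  have hexpl1 : Real.exp (-l) ≤ 1 := by
    rw [Real.exp_le_one_iff]; linarith
  rcases Nat.eq_zero_or_pos t with rfl | ht
  · have hset : {ω : Ω | ∑ i ∈ Finset.range 0, ‖ζ i ω‖ ^ 2 ≤
        (4 * (∑ i ∈ Finset.range 0, (b i)⁻¹) * ((0:ℕ) * Real.log (9 * d) + l)) ^ 3}
        = Set.univ := by
      ext ω; simp
    rw [hset, measure_univ]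
    simp only [ENNReal.toReal_one]
    linarith
  -- main case : 1 ≤ t
  have ht1 : (1:ℝ) ≤ (t:ℝ) := by exact_mod_cast ht
  have h9d : (0:ℝ) < 9 * d := by positivity
  have h4d : (0:ℝ) < 4 * d := by positivity
  have hlog2 : (2:ℝ) ≤ Real.log (9 * d) := by
    rw [Real.le_log_iff_exp_le h9d]
    have h1 : Real.exp 1 < 2.7182818286 := Real.exp_one_lt_d9
    have h2 : Real.exp 2 = Real.exp 1 * Real.exp 1 := by
      rw [← Real.exp_add]; norm_num
    have h3 : (0:ℝ) < Real.exp 1 := Real.exp_pos 1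
    nlinarith
  have hlog4 : Real.log (4 * d) ≤ Real.log (9 * d) := by
    apply Real.log_le_log h4d; linarith
  have hlog4pos : 0 < Real.log (4 * d) := by
    apply Real.log_pos; linarith
  set K : ℝ := Real.log (4 * d) + t + l with hKdef
  have hK0 : 0 < K := by positivity
  set v : ℕ → ℝ := fun i => (b i)⁻¹ * K with hvdef
  have hv : ∀ i, 0 < v i := fun i => by
    have := hb i; positivity
  set τ : ℕ → ℝ := fun i => (v i) ^ ((3:ℝ)/2) with hτdef
  have hτ : ∀ i, 0 < τ i := fun i => Real.rpow_pos_of_pos (hv i) _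
  have hτ23 : ∀ i, (τ i) ^ ((2:ℝ)/3) = v i := by
    intro i
    rw [hτdef]
    rw [← Real.rpow_mul (hv i).le]
    norm_num
  have hτ2 : ∀ i, (τ i) ^ 2 = (v i) ^ 3 := by
    intro i
    have : (τ i) ^ (2:ℕ) = (τ i) ^ ((2:ℕ):ℝ) := (Real.rpow_natCast _ 2).symm
    rw [this, hτdef]
    rw [← Real.rpow_mul (hv i).le]
    norm_num
  -- tail bound for each i
  have hbad : ∀ i, (μ {ω | τ i ≤ ‖ζ i ω‖}).toReal ≤ Real.exp (-(t:ℝ)) * Real.exp (-l) := by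
    intro i
    have h := htail i (τ i) (hτ i).le
    rw [hτ23 i] at h
    have hbv : -(b i) * v i = -K := by
      show -(b i) * ((b i)⁻¹ * K) = -K
      rw [neg_mul, mul_inv_cancel_left₀ (hb i).ne']
    rw [hbv] at h
    have hexpK : (4:ℝ) * d * Real.exp (-K) = Real.exp (-(t:ℝ)) * Real.exp (-l) := by
      rw [hKdef]
      rw [show -(Real.log (4 * d) + (t:ℝ) + l) = -Real.log (4*d) + (-(t:ℝ)) + (-l) by ring]
      rw [Real.exp_add, Real.exp_add, Real.exp_neg, Real.exp_log h4d]
      field_simp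
    rw [hexpK] at h
    exact h
  have hbadE : ∀ i, μ {ω | τ i ≤ ‖ζ i ω‖} ≤
      ENNReal.ofReal (Real.exp (-(t:ℝ)) * Real.exp (-l)) := by
    intro i
    have hne : μ {ω | τ i ≤ ‖ζ i ω‖} ≠ ⊤ := measure_ne_top μ _
    rw [← ENNReal.ofReal_toReal hne]
    exact ENNReal.ofReal_le_ofReal (hbad i)
  -- good event
  set G : Set Ω := ⋂ i ∈ Finset.range t, {ω | ‖ζ i ω‖ < τ i} with hGdef
  have hGc : Gᶜ = ⋃ i ∈ Finset.range t, {ω | τ i ≤ ‖ζ i ω‖} := by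
    rw [hGdef, Set.compl_iInter₂]
    apply Set.iUnion₂_congr
    intro i _
    ext ω
    simp [not_lt]
  have hμGc : μ Gᶜ ≤ ENNReal.ofReal (Real.exp (-l)) := by
    rw [hGc]
    calc μ (⋃ i ∈ Finset.range t, {ω | τ i ≤ ‖ζ i ω‖})
        ≤ ∑ i ∈ Finset.range t, μ {ω | τ i ≤ ‖ζ i ω‖} :=
          measure_biUnion_finset_le _ _
      _ ≤ ∑ _i ∈ Finset.range t, ENNReal.ofReal (Real.exp (-(t:ℝ)) * Real.exp (-l)) :=
          Finset.sum_le_sum (fun i _ => hbadE i)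
      _ = (t:ℕ) • ENNReal.ofReal (Real.exp (-(t:ℝ)) * Real.exp (-l)) := by
          rw [Finset.sum_const, Finset.card_range]
      _ = ENNReal.ofReal ((t:ℝ) * (Real.exp (-(t:ℝ)) * Real.exp (-l))) := by
          rw [nsmul_eq_mul, ← ENNReal.ofReal_natCast, ← ENNReal.ofReal_mul (by positivity)]
      _ ≤ ENNReal.ofReal (Real.exp (-l)) := by
          apply ENNReal.ofReal_le_ofReal
          have h1 : (t:ℝ) * Real.exp (-(t:ℝ)) ≤ 1 := by
            rw [Real.exp_neg]
            rw [mul_inv_le_iff₀ (Real.exp_pos _)]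
            have := Real.add_one_le_exp (t:ℝ)
            linarith
          have h2 : 0 < Real.exp (-l) := Real.exp_pos _
          nlinarith
  have hμG : (1:ENNReal) - ENNReal.ofReal (Real.exp (-l)) ≤ μ G := by
    have h1 : (1:ENNReal) ≤ μ G + μ Gᶜ := by
      calc (1:ENNReal) = μ Set.univ := (measure_univ (μ := μ)).symm
        _ = μ (G ∪ Gᶜ) := by rw [Set.union_compl_self]
        _ ≤ μ G + μ Gᶜ := measure_union_le _ _
    have h2 : (1:ENNReal) ≤ μ G + ENNReal.ofReal (Real.exp (-l)) :=
      h1.trans (add_le_add_right hμGc _)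
    exact tsub_le_iff_right.mpr h2
  -- inclusion of the good event in the target set
  have hsub : G ⊆ {ω | ∑ i ∈ Finset.range t, ‖ζ i ω‖ ^ 2 ≤
      (4 * (∑ i ∈ Finset.range t, (b i)⁻¹) * (t * Real.log (9 * d) + l)) ^ 3} := by
    intro ω hω
    simp only [hGdef, Set.mem_iInter, Set.mem_setOf_eq] at hω
    simp only [Set.mem_setOf_eq]
    have step1 : ∑ i ∈ Finset.range t, ‖ζ i ω‖ ^ 2 ≤ ∑ i ∈ Finset.range t, (v i) ^ 3 := by
      apply Finset.sum_le_sum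
      intro i hi
      rw [← hτ2 i]
      have := (hω i hi).le
      have := norm_nonneg (ζ i ω)
      nlinarith
    have step2 : ∑ i ∈ Finset.range t, (v i) ^ 3 ≤ (∑ i ∈ Finset.range t, v i) ^ 3 :=
      sum_cube_le_cube_sum _ _ (fun i _ => (hv i).le)
    have hsumv : ∑ i ∈ Finset.range t, v i = (∑ i ∈ Finset.range t, (b i)⁻¹) * K := by
      rw [Finset.sum_mul]
    have hB : 0 ≤ ∑ i ∈ Finset.range t, (b i)⁻¹ :=
      Finset.sum_nonneg (fun i _ => (inv_pos.mpr (hb i)).le)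
    have hKM : K ≤ 4 * ((t:ℝ) * Real.log (9 * d) + l) := by
      rw [hKdef]
      nlinarith [mul_le_mul_of_nonneg_left hlog2 (by linarith : (0:ℝ) ≤ (t:ℝ)),
        mul_le_mul_of_nonneg_right ht1 (by linarith : (0:ℝ) ≤ Real.log (9*d))]
    have step3 : (∑ i ∈ Finset.range t, v i) ^ 3 ≤
        (4 * (∑ i ∈ Finset.range t, (b i)⁻¹) * ((t:ℝ) * Real.log (9 * d) + l)) ^ 3 := by
      apply pow_le_pow_left₀
      · rw [hsumv]; positivity
      · rw [hsumv]
        calc (∑ i ∈ Finset.range t, (b i)⁻¹) * K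
            ≤ (∑ i ∈ Finset.range t, (b i)⁻¹) * (4 * ((t:ℝ) * Real.log (9 * d) + l)) :=
              mul_le_mul_of_nonneg_left hKM hB
          _ = 4 * (∑ i ∈ Finset.range t, (b i)⁻¹) * ((t:ℝ) * Real.log (9 * d) + l) := by ring
    linarith
  -- conclude
  have hμS : (1:ENNReal) - ENNReal.ofReal (Real.exp (-l)) ≤
      μ {ω | ∑ i ∈ Finset.range t, ‖ζ i ω‖ ^ 2 ≤
        (4 * (∑ i ∈ Finset.range t, (b i)⁻¹) * (t * Real.log (9 * d) + l)) ^ 3} :=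
    hμG.trans (measure_mono hsub)
  have hne : μ {ω | ∑ i ∈ Finset.range t, ‖ζ i ω‖ ^ 2 ≤
      (4 * (∑ i ∈ Finset.range t, (b i)⁻¹) * (t * Real.log (9 * d) + l)) ^ 3} ≠ ⊤ :=
    measure_ne_top μ _
  have := ENNReal.toReal_mono hne hμS
  rw [ENNReal.toReal_sub_of_le (by
      rw [← ENNReal.ofReal_one]
      exact ENNReal.ofReal_le_ofReal hexpl1) (by simp),
    ENNReal.toReal_ofReal (Real.exp_nonneg _)] at this
  simpa using this
end
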